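/- If X = Y XOR Z with Y, Z independent uniform bits, then \widetilde{CI}(X:Y;Z) = 1 bit, while \widetilde{CI}(X:(Y,Z);Z) = 0 bit; hence \widetilde{CI} is not monotone under enlarging a right argument. -/

import Mathlib

open scoped BigOperators Classical

noncomputable section

/-- Shannon entropy (in bits) of a distribution on a finite type. -/
def ent {A : Type*} [Fintype A] (q : A → ℝ) : ℝ :=
  -∑ a, q a * Real.logb 2 (q a)

def ent2 {A B : Type*} [Fintype A] [Fintype B] (q : A → B → ℝ) : ℝ :=
  ent (fun p : A × B => q p.1 p.2)

def ent3 {A B C : Type*} [Fintype A] [Fintype B] [Fintype C] (q : A → B → C → ℝ) : ℝ :=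
  ent (fun p : A × B × C => q p.1 p.2.1 p.2.2)

/-- Mutual information MI(A:B) (in bits) of a joint distribution `q`. -/
def MI {A B : Type*} [Fintype A] [Fintype B] (q : A → B → ℝ) : ℝ :=
  ent (fun a => ∑ b, q a b) + ent (fun b => ∑ a, q a b) - ent2 q

/-- Conditional mutual information MI(A:B|C) of a joint distribution `q` of (A,B,C):
`MI(A:B|C) = H(A,C) + H(B,C) - H(C) - H(A,B,C)`. -/
def CMI {A B C : Type*} [Fintype A] [Fintype B] [Fintype C] (q : A → B → C → ℝ) : ℝ :=
  ent2 (fun a c => ∑ b, q a b c) + ent2 (fun b c => ∑ a, q a b c)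
    - ent (fun c => ∑ a, ∑ b, q a b c) - ent3 q

/-- Coinformation CoI(A;B;C) = MI(A:B) - MI(A:B|C). -/
def CoI {A B C : Type*} [Fintype A] [Fintype B] [Fintype C] (q : A → B → C → ℝ) : ℝ :=
  MI (fun a b => ∑ c, q a b c) - CMI q

structure IsDist2 {A B : Type*} [Fintype A] [Fintype B] (q : A → B → ℝ) : Prop where
  nonneg : ∀ a b, 0 ≤ q a b
  sum_one : ∑ a, ∑ b, q a b = 1

structure IsDist3 {A B C : Type*} [Fintype A] [Fintype B] [Fintype C]
    (q : A → B → C → ℝ) : Prop where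
  nonneg : ∀ a b c, 0 ≤ q a b c
  sum_one : ∑ a, ∑ b, ∑ c, q a b c = 1

structure IsDist4 {A B C D : Type*} [Fintype A] [Fintype B] [Fintype C] [Fintype D]
    (q : A → B → C → D → ℝ) : Prop where
  nonneg : ∀ a b c d, 0 ≤ q a b c d
  sum_one : ∑ a, ∑ b, ∑ c, ∑ d, q a b c d = 1

structure IsDist5 {A B C D E : Type*} [Fintype A] [Fintype B] [Fintype C] [Fintype D] [Fintype E]
    (q : A → B → C → D → E → ℝ) : Prop where
  nonneg : ∀ a b c d e, 0 ≤ q a b c d e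
  sum_one : ∑ a, ∑ b, ∑ c, ∑ d, ∑ e, q a b c d e = 1

/-- Δ_P: the joint distributions of (X,Y,Z) having the same (X,Y)- and (X,Z)-marginals as P. -/
def Delta {A B C : Type*} [Fintype A] [Fintype B] [Fintype C] (p : A → B → C → ℝ) :
    Set (A → B → C → ℝ) :=
  {q | IsDist3 q ∧ (∀ a b, ∑ c, q a b c = ∑ c, p a b c)
      ∧ (∀ a c, ∑ b, q a b c = ∑ b, p a b c)}

/-- MI(X:(Y,Z)). -/
def MIpair {A B C : Type*} [Fintype A] [Fintype B] [Fintype C] (q : A → B → C → ℝ) : ℝ :=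
  MI (fun a (p : B × C) => q a p.1 p.2)

/-- The unique information UI~(X : Y \ Z) = min over Δ_P of MI_Q(X:Y|Z). -/
def UI {A B C : Type*} [Fintype A] [Fintype B] [Fintype C] (p : A → B → C → ℝ) : ℝ :=
  sInf (CMI '' Delta p)

/-- The unique information UI~(X : Z \ Y) = min over Δ_P of MI_Q(X:Z|Y). -/
def UIr {A B C : Type*} [Fintype A] [Fintype B] [Fintype C] (p : A → B → C → ℝ) : ℝ :=
  sInf ((fun q => CMI (fun a c b => q a b c)) '' Delta p)

/-- The shared information SI~(X : Y ; Z) = max over Δ_P of CoI_Q(X;Y;Z). -/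
def SI {A B C : Type*} [Fintype A] [Fintype B] [Fintype C] (p : A → B → C → ℝ) : ℝ :=
  sSup (CoI '' Delta p)

/-- The complementary information CI~(X : Y ; Z) = MI_P(X:(Y,Z)) - min over Δ_P of MI_Q(X:(Y,Z)). -/
def CI {A B C : Type*} [Fintype A] [Fintype B] [Fintype C] (p : A → B → C → ℝ) : ℝ :=
  MIpair p - sInf (MIpair '' Delta p)

/-- The joint distribution of (X,Y,Z) with Y, Z independent uniform bits and `X = Y XOR Z`. -/
def pXor : Bool → Bool → Bool → ℝ := fun x y z => if x = xor y z then 1/4 else 0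

/-- The joint distribution of (X,(Y,Z),Z) for the XOR example. -/
def pXorPairRight : Bool → (Bool × Bool) → Bool → ℝ :=
  fun x w z => if x = xor w.1 w.2 ∧ w.2 = z then 1/4 else 0


section Aux

lemma key_ineq {q x y s : ℝ} (hq : 0 ≤ q) (hx : q ≤ x) (hy : q ≤ y) (hs : q ≤ s)
    (hx0 : 0 ≤ x) (hy0 : 0 ≤ y) (hs0 : 0 ≤ s) :
    (q - x * y / s) / Real.log 2 ≤
      q * (Real.logb 2 q + Real.logb 2 s - Real.logb 2 x - Real.logb 2 y) := by
  have hlog2 : 0 < Real.log 2 := Real.log_pos one_lt_two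
  rcases eq_or_lt_of_le hq with h0 | h0
  · rw [← h0]
    simp only [zero_mul, zero_sub]
    apply div_nonpos_of_nonpos_of_nonneg _ hlog2.le
    simp only [neg_nonpos]
    positivity
  · have hx' : 0 < x := lt_of_lt_of_le h0 hx
    have hy' : 0 < y := lt_of_lt_of_le h0 hy
    have hs' : 0 < s := lt_of_lt_of_le h0 hs
    have hkey : Real.log (x * y / (q * s)) ≤ x * y / (q * s) - 1 :=
      Real.log_le_sub_one_of_pos (by positivity)
    have hcomb : Real.logb 2 q + Real.logb 2 s - Real.logb 2 x - Real.logb 2 y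
        = -(Real.log (x * y / (q * s))) / Real.log 2 := by
      rw [Real.log_div (by positivity) (by positivity), Real.log_mul hx'.ne' hy'.ne',
        Real.log_mul h0.ne' hs'.ne']
      simp [Real.logb]
      ring
    rw [hcomb]
    have e1 : q * (-Real.log (x * y / (q * s)) / Real.log 2)
        = q * -Real.log (x * y / (q * s)) / Real.log 2 := by ring
    rw [e1, div_le_div_iff_of_pos_right hlog2]
    have h2 : q * (x * y / (q * s)) = x * y / s := by
      field_simp
    nlinarith [mul_le_mul_of_nonneg_left hkey hq]

lemma MI_eq_sum {A B : Type*} [Fintype A] [Fintype B] (q : A → B → ℝ) :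
    MI q = ∑ a, ∑ b, q a b *
      (Real.logb 2 (q a b) - Real.logb 2 (∑ b', q a b') - Real.logb 2 (∑ a', q a' b)) := by
  simp only [MI, ent2, ent]
  rw [Fintype.sum_prod_type]
  have h1 : ∀ a : A, (∑ b, q a b) * Real.logb 2 (∑ b', q a b')
      = ∑ b, q a b * Real.logb 2 (∑ b', q a b') := fun a => Finset.sum_mul _ _ _
  have h2 : ∑ b, (∑ a, q a b) * Real.logb 2 (∑ a', q a' b)
      = ∑ a, ∑ b, q a b * Real.logb 2 (∑ a', q a' b) := by
    rw [Finset.sum_comm]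
    exact Finset.sum_congr rfl fun b _ => Finset.sum_mul _ _ _
  simp only [h1, h2, mul_sub, Finset.sum_sub_distrib]
  ring

lemma MI_nonneg {A B : Type*} [Fintype A] [Fintype B] {q : A → B → ℝ}
    (h : IsDist2 q) : 0 ≤ MI q := by
  have hlog2 : 0 < Real.log 2 := Real.log_pos one_lt_two
  rw [MI_eq_sum]
  have hrow : ∀ a b, q a b ≤ ∑ b', q a b' := fun a b =>
    Finset.single_le_sum (fun b' _ => h.nonneg a b') (Finset.mem_univ b)
  have hcol : ∀ a b, q a b ≤ ∑ a', q a' b := fun a b =>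
    Finset.single_le_sum (fun a' _ => h.nonneg a' b) (Finset.mem_univ a)
  have hone : ∀ a b, q a b ≤ 1 := by
    intro a b
    calc q a b ≤ ∑ b', q a b' := hrow a b
    _ ≤ ∑ a', ∑ b', q a' b' := Finset.single_le_sum
        (fun a' _ => Finset.sum_nonneg fun b' _ => h.nonneg a' b') (Finset.mem_univ a)
    _ = 1 := h.sum_one
  calc (0:ℝ) = (∑ a, ∑ b, (q a b - (∑ b', q a b') * (∑ a', q a' b) / 1)) / Real.log 2 := by
        simp only [div_one, Finset.sum_sub_distrib, h.sum_one]
        have : ∑ a, ∑ b, (∑ b', q a b') * (∑ a', q a' b)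
            = (∑ a, ∑ b', q a b') * (∑ b, ∑ a', q a' b) := by
          rw [Finset.sum_mul]
          exact Finset.sum_congr rfl fun a _ => (Finset.mul_sum _ _ _).symm
        rw [this, h.sum_one, Finset.sum_comm, h.sum_one]
        norm_num
    _ = ∑ a, ∑ b, (q a b - (∑ b', q a b') * (∑ a', q a' b) / 1) / Real.log 2 := by
        rw [Finset.sum_div]
        exact Finset.sum_congr rfl fun a _ => Finset.sum_div _ _ _
    _ ≤ ∑ a, ∑ b, q a b * (Real.logb 2 (q a b) - Real.logb 2 (∑ b', q a b')
          - Real.logb 2 (∑ a', q a' b)) := by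
        apply Finset.sum_le_sum; intro a _
        apply Finset.sum_le_sum; intro b _
        have := key_ineq (h.nonneg a b) (hrow a b) (hcol a b) (hone a b)
          ((h.nonneg a b).trans (hrow a b)) ((h.nonneg a b).trans (hcol a b)) zero_le_one
        simpa using this

lemma MIpair_nonneg {A B C : Type*} [Fintype A] [Fintype B] [Fintype C]
    {q : A → B → C → ℝ} (h : IsDist3 q) : 0 ≤ MIpair q := by
  apply MI_nonneg
  constructor
  · intro a p; exact h.nonneg a p.1 p.2
  · rw [← h.sum_one]
    exact Finset.sum_congr rfl fun a _ => Fintype.sum_prod_type _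

lemma marg_le_MIpair {A B C : Type*} [Fintype A] [Fintype B] [Fintype C]
    {q : A → B → C → ℝ} (h : IsDist3 q) :
    MI (fun a b => ∑ c, q a b c) ≤ MIpair q := by
  have hlog2 : 0 < Real.log 2 := Real.log_pos one_lt_two
  have hnn := h.nonneg
  rw [← sub_nonneg]
  have hdiff : MIpair q - MI (fun a b => ∑ c, q a b c)
      = ∑ a, ∑ b, ∑ c, q a b c *
        (Real.logb 2 (q a b c) + Real.logb 2 (∑ a', ∑ c', q a' b c')
          - Real.logb 2 (∑ c', q a b c') - Real.logb 2 (∑ a', q a' b c)) := by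
    rw [MIpair, MI_eq_sum, MI_eq_sum]
    simp only [Fintype.sum_prod_type, Finset.sum_mul]
    rw [← Finset.sum_sub_distrib]
    refine Finset.sum_congr rfl fun a _ => ?_
    rw [← Finset.sum_sub_distrib]
    refine Finset.sum_congr rfl fun b _ => ?_
    rw [← Finset.sum_sub_distrib]
    refine Finset.sum_congr rfl fun c _ => ?_
    have hswap : (∑ a', ∑ c', q a' b c') = ∑ c', ∑ a', q a' b c' := Finset.sum_comm
    rw [hswap]
    ring
  rw [hdiff]
  have hx : ∀ a b c, q a b c ≤ ∑ c', q a b c' := fun a b c =>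
    Finset.single_le_sum (fun c' _ => hnn a b c') (Finset.mem_univ c)
  have hy : ∀ a b c, q a b c ≤ ∑ a', q a' b c := fun a b c =>
    Finset.single_le_sum (fun a' _ => hnn a' b c) (Finset.mem_univ a)
  have hs : ∀ a b c, q a b c ≤ ∑ a', ∑ c', q a' b c' := by
    intro a b c
    calc q a b c ≤ ∑ c', q a b c' := hx a b c
    _ ≤ ∑ a', ∑ c', q a' b c' := Finset.single_le_sum
        (fun a' _ => Finset.sum_nonneg fun c' _ => hnn a' b c') (Finset.mem_univ a)
  have hsum0 : ∑ a, ∑ b, ∑ c, (q a b c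
      - (∑ c', q a b c') * (∑ a', q a' b c) / (∑ a', ∑ c', q a' b c')) = 0 := by
    simp only [Finset.sum_sub_distrib, h.sum_one]
    have hmain : ∑ a, ∑ b, ∑ c,
        (∑ c', q a b c') * (∑ a', q a' b c) / (∑ a', ∑ c', q a' b c') = 1 := by
      rw [Finset.sum_comm]
      have hper : ∀ b : B, ∑ a, ∑ c,
          (∑ c', q a b c') * (∑ a', q a' b c) / (∑ a', ∑ c', q a' b c')
          = ∑ a, ∑ c, q a b c := by
        intro b
        have : ∑ a, ∑ c, (∑ c', q a b c') * (∑ a', q a' b c) / (∑ a', ∑ c', q a' b c')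
            = (∑ a, ∑ c', q a b c') * (∑ c, ∑ a', q a' b c) / (∑ a', ∑ c', q a' b c') := by
          rw [Finset.sum_mul, Finset.sum_div]
          refine Finset.sum_congr rfl fun a _ => ?_
          rw [Finset.mul_sum, Finset.sum_div]
        rw [this,
          show (∑ c, ∑ a', q a' b c) = ∑ c', ∑ a', q a' b c' from rfl,
          show (∑ c', ∑ a', q a' b c') = ∑ a', ∑ c', q a' b c' from Finset.sum_comm]
        rcases eq_or_ne (∑ a', ∑ c', q a' b c') 0 with h0 | h0
        · rw [h0]
          simp [h0]
        · rw [mul_div_assoc, div_self h0, mul_one]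
      rw [Finset.sum_congr rfl fun b _ => hper b, Finset.sum_comm, h.sum_one]
    rw [hmain]; ring
  calc (0:ℝ) = (∑ a, ∑ b, ∑ c, (q a b c
        - (∑ c', q a b c') * (∑ a', q a' b c) / (∑ a', ∑ c', q a' b c'))) / Real.log 2 := by
        rw [hsum0]; simp
    _ = ∑ a, ∑ b, ∑ c, (q a b c
        - (∑ c', q a b c') * (∑ a', q a' b c) / (∑ a', ∑ c', q a' b c')) / Real.log 2 := by
        rw [Finset.sum_div]
        refine Finset.sum_congr rfl fun a _ => ?_
        rw [Finset.sum_div]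
        exact Finset.sum_congr rfl fun b _ => Finset.sum_div _ _ _
    _ ≤ _ := by
        apply Finset.sum_le_sum; intro a _
        apply Finset.sum_le_sum; intro b _
        apply Finset.sum_le_sum; intro c _
        exact key_ineq (hnn a b c) (hx a b c) (hy a b c) (hs a b c)
          ((hnn a b c).trans (hx a b c)) ((hnn a b c).trans (hy a b c))
          ((hnn a b c).trans (hs a b c))

lemma logb_half : Real.logb 2 (1/2 : ℝ) = -1 := by
  rw [show (1/2:ℝ) = (2:ℝ)⁻¹ by norm_num, Real.logb_inv,
    Real.logb_self_eq_one one_lt_two]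

lemma logb_quarter : Real.logb 2 (1/4 : ℝ) = -2 := by
  rw [show (1/4:ℝ) = ((2:ℝ)^(2:ℕ))⁻¹ by norm_num, Real.logb_inv, Real.logb_pow,
    Real.logb_self_eq_one one_lt_two]
  norm_num

lemma logb_eighth : Real.logb 2 (1/8 : ℝ) = -3 := by
  rw [show (1/8:ℝ) = ((2:ℝ)^(3:ℕ))⁻¹ by norm_num, Real.logb_inv, Real.logb_pow,
    Real.logb_self_eq_one one_lt_two]
  norm_num

end Aux


section Compute

lemma dist_pXor : IsDist3 pXor := by
  constructor
  · intro a b c; unfold pXor; split <;> norm_num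
  · simp only [pXor, Fintype.sum_bool]
    norm_num

lemma dist_pXorPairRight : IsDist3 pXorPairRight := by
  constructor
  · intro a b c; unfold pXorPairRight; split <;> norm_num
  · simp only [pXorPairRight, Fintype.sum_prod_type, Fintype.sum_bool]
    norm_num

lemma unif_mem : (fun _ _ _ => (1/8 : ℝ)) ∈ Delta pXor := by
  refine ⟨⟨fun _ _ _ => by norm_num, by simp [Fintype.sum_bool]; norm_num⟩, ?_, ?_⟩
  · intro a b; cases a <;> cases b <;> simp [pXor, Fintype.sum_bool] <;> norm_num
  · intro a c; cases a <;> cases c <;> simp [pXor, Fintype.sum_bool] <;> norm_num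

lemma MIpair_pXor : MIpair pXor = 1 := by
  simp only [MIpair, MI, ent, ent2, pXor, Fintype.sum_prod_type, Fintype.sum_bool]
  norm_num [logb_half, logb_quarter, logb_eighth]

lemma MIpair_unif : MIpair (fun _ _ _ => (1/8 : ℝ) : Bool → Bool → Bool → ℝ) = 0 := by
  simp only [MIpair, MI, ent, ent2, Fintype.sum_prod_type, Fintype.sum_bool]
  norm_num [logb_half, logb_quarter, logb_eighth]

lemma MIpair_pXorPairRight : MIpair pXorPairRight = 1 := by
  simp only [MIpair, MI, ent, ent2, pXorPairRight, Fintype.sum_prod_type, Fintype.sum_bool]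
  norm_num [logb_half, logb_quarter, logb_eighth]

lemma MI_marg_pXorPairRight : MI (fun x w => ∑ z, pXorPairRight x w z) = 1 := by
  simp only [MI, ent, ent2, pXorPairRight, Fintype.sum_prod_type, Fintype.sum_bool]
  norm_num [logb_half, logb_quarter, logb_eighth]

lemma sInf_pXor : sInf (MIpair '' Delta pXor) = 0 := by
  have hbdd : BddBelow (MIpair '' Delta pXor) := by
    refine ⟨0, ?_⟩
    rintro r ⟨q, hq, rfl⟩
    exact MIpair_nonneg hq.1
  have hmem : (0 : ℝ) ∈ MIpair '' Delta pXor := ⟨_, unif_mem, MIpair_unif⟩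
  apply le_antisymm (csInf_le hbdd hmem)
  apply le_csInf ⟨0, hmem⟩
  rintro r ⟨q, hq, rfl⟩
  exact MIpair_nonneg hq.1

lemma sInf_pXorPairRight : sInf (MIpair '' Delta pXorPairRight) = 1 := by
  have hpmem : pXorPairRight ∈ Delta pXorPairRight :=
    ⟨dist_pXorPairRight, fun _ _ => rfl, fun _ _ => rfl⟩
  have hmem : (1 : ℝ) ∈ MIpair '' Delta pXorPairRight :=
    ⟨_, hpmem, MIpair_pXorPairRight⟩
  have hlb : ∀ r ∈ MIpair '' Delta pXorPairRight, (1:ℝ) ≤ r := by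
    rintro r ⟨q, hq, rfl⟩
    have hm : (fun a b => ∑ c, q a b c) = fun x w => ∑ z, pXorPairRight x w z := by
      funext a b; exact hq.2.1 a b
    calc (1:ℝ) = MI (fun a b => ∑ c, q a b c) := by rw [hm, MI_marg_pXorPairRight]
    _ ≤ MIpair q := marg_le_MIpair hq.1
  exact le_antisymm (csInf_le ⟨1, hlb⟩ hmem) (le_csInf ⟨1, hmem⟩ hlb)

end Compute

/-- if `X = Y XOR Z` with Y, Z independent uniform bits, then
`CI~(X:Y;Z) = 1` bit while `CI~(X:(Y,Z);Z) = 0` bit; hence `CI~` is not monotone under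
enlarging a right argument. -/
theorem CI_xor_example_right :
    CI pXor = 1 ∧ CI pXorPairRight = 0 ∧ CI pXorPairRight < CI pXor := by
  have h1 : CI pXor = 1 := by
    rw [CI, sInf_pXor, MIpair_pXor]; ring
  have h2 : CI pXorPairRight = 0 := by
    rw [CI, sInf_pXorPairRight, MIpair_pXorPairRight]; ring
  exact ⟨h1, h2, by rw [h1, h2]; norm_num⟩

end
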